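/- arXiv:2506.04288 — 2 statements merged into one kernel-verified Lean document; each statement's English description precedes it below -/
import Mathlib

section
/- Let X be a metric space, let P and ν be Borel probability measures on X, let (νₙ) be Borel probability measures on X converging weakly to ν, and let c ≥ 0. If νₙ(A) ≤ c·P(A) for every Borel set A ⊆ X and every n, then ν(A) ≤ c·P(A) for every Borel set A ⊆ X. -/
open Filter Topology MeasureTheory BoundedContinuousFunction

/-- If Borel probability measures `νₙ` on a metric space converge weakly
to `ν` (integrals of bounded continuous functions converge), and `νₙ(A) ≤ c·P(A)` for
every Borel set `A` and every `n`, then `ν(A) ≤ c·P(A)` for every Borel set `A`. -/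
theorem stmt_12 {X : Type*} [MetricSpace X] [MeasurableSpace X] [BorelSpace X]
    (P ν : Measure X) [IsProbabilityMeasure P] [IsProbabilityMeasure ν]
    (νn : ℕ → Measure X) (hνn : ∀ n, IsProbabilityMeasure (νn n))
    (hweak : ∀ f : X →ᵇ ℝ,
      Tendsto (fun n => ∫ x, f x ∂(νn n)) atTop (𝓝 (∫ x, f x ∂ν)))
    (c : ℝ) (hc : 0 ≤ c)
    (hdom : ∀ n, ∀ A : Set X, MeasurableSet A → νn n A ≤ ENNReal.ofReal c * P A) :
    ∀ A : Set X, MeasurableSet A → ν A ≤ ENNReal.ofReal c * P A := by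
  have hopen : ∀ G : Set X, IsOpen G → ν G ≤ ENNReal.ofReal c * P G := by
    intro G hG
    set μ : ProbabilityMeasure X := ⟨ν, ‹_›⟩ with hμ
    set μs : ℕ → ProbabilityMeasure X := fun n => ⟨νn n, hνn n⟩ with hμs
    have hlim : Tendsto μs atTop (𝓝 μ) := by
      rw [ProbabilityMeasure.tendsto_iff_forall_integral_tendsto]
      exact hweak
    have h1 : ν G ≤ atTop.liminf fun n => (νn n) G :=
      ProbabilityMeasure.le_liminf_measure_open_of_tendsto hlim hG
    refine h1.trans ?_
    exact Filter.liminf_le_of_frequently_le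
      (Frequently.of_forall fun n => hdom n G hG.measurableSet)
  intro A _
  haveI : (ENNReal.ofReal c • P).OuterRegular :=
    MeasureTheory.Measure.OuterRegular.smul P ENNReal.ofReal_ne_top
  calc ν A ≤ ⨅ (U : Set X) (_ : A ⊆ U) (_ : IsOpen U), ENNReal.ofReal c * P U := by
        refine le_iInf fun U => le_iInf fun hAU => le_iInf fun hU =>
          (measure_mono hAU).trans (hopen U hU)
    _ = (ENNReal.ofReal c • P) A := by
        rw [Set.measure_eq_iInf_isOpen A (ENNReal.ofReal c • P)]
        simp [Measure.smul_apply, smul_eq_mul]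
    _ = ENNReal.ofReal c * P A := by simp [Measure.smul_apply, smul_eq_mul]
end

section
/- Let Θ and Y be nonempty sets and R : Θ × Y → ℝ a function for which all the suprema and infima below are finite. Let ε ≥ 0 and suppose θ̂ ∈ Θ satisfies R(θ̂, y) ≤ inf_{θ ∈ Θ} R(θ, y) + ε for every y ∈ Y. Assume the minimax equality sup_{y ∈ Y} inf_{θ ∈ Θ} R(θ, y) = inf_{θ ∈ Θ} sup_{y ∈ Y} R(θ, y) holds, and that θ* ∈ Θ attains inf_{θ} sup_{y} R(θ, y). Then sup_{y ∈ Y} R(θ̂, y) ≤ sup_{y ∈ Y} R(θ*, y) + ε. -/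
/-- If `θ̂` is ε-nearly minimizing for each risk `R(·, y)`, the minimax
equality holds, and `θ*` attains the minimax value `inf_θ sup_y R(θ, y)`, then the
worst-case risk of `θ̂` exceeds that of `θ*` by at most `ε`. All suprema and infima
involved are assumed finite (boundedness hypotheses). -/
theorem stmt_16 {Θ Y : Type*} [Nonempty Θ] [Nonempty Y] (R : Θ → Y → ℝ)
    (hbdd₁ : ∀ θ, BddAbove (Set.range fun y => R θ y))
    (hbdd₂ : ∀ y, BddBelow (Set.range fun θ => R θ y))
    (hbdd₃ : BddBelow (Set.range fun θ => ⨆ y, R θ y))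
    (hbdd₄ : BddAbove (Set.range fun y => ⨅ θ, R θ y))
    (ε : ℝ) (hε : 0 ≤ ε) (θhat : Θ)
    (hnear : ∀ y, R θhat y ≤ (⨅ θ, R θ y) + ε)
    (hminimax : (⨆ y, ⨅ θ, R θ y) = ⨅ θ, ⨆ y, R θ y)
    (θstar : Θ) (hstar : (⨆ y, R θstar y) = ⨅ θ, ⨆ y, R θ y) :
    (⨆ y, R θhat y) ≤ (⨆ y, R θstar y) + ε := by
  rw [hstar, ← hminimax]
  refine ciSup_le fun y => (hnear y).trans ?_
  exact add_le_add_left (le_ciSup hbdd₄ y) ε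
end
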